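/- arXiv:math/0606726 — 2 statements merged into one kernel-verified Lean document; each statement's English description precedes it below -/
import Mathlib

section
/- Let σ = u x z v and σ' = u z x v be permutations of X (as standard words) with x < z, where v contains some letter y with x < y < z. Then φ(σ) = φ(σ'). -/
open scoped Classical

/-- `d` is a diagonal of the convex `(n+2)`-gon with vertices `0,…,n+1`
(in clockwise increasing order): it joins two nonadjacent vertices. -/
def IsDiagonal (n : ℕ) (d : ℕ × ℕ) : Prop :=
  d.1 < d.2 ∧ d.2 ≤ n + 1 ∧ d.2 ≠ d.1 + 1 ∧ ¬(d.1 = 0 ∧ d.2 = n + 1)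

/-- Two diagonals of a convex polygon cross. -/
def Crosses (d e : ℕ × ℕ) : Prop :=
  (d.1 < e.1 ∧ e.1 < d.2 ∧ d.2 < e.2) ∨ (e.1 < d.1 ∧ d.1 < e.2 ∧ e.2 < d.2)

/-- A triangulation of the convex `(n+2)`-gon: `n-1` pairwise noncrossing diagonals. -/
def IsTriangulation (n : ℕ) (D : Finset (ℕ × ℕ)) : Prop :=
  (∀ d ∈ D, IsDiagonal n d) ∧ (∀ d ∈ D, ∀ e ∈ D, ¬ Crosses d e) ∧ D.card = n - 1

/-- `{a,b}` (with `a<b`) is an edge of the triangulation `D`: a polygon side or a diagonal. -/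
def IsEdge (n : ℕ) (D : Finset (ℕ × ℕ)) (a b : ℕ) : Prop :=
  a < b ∧ b ≤ n + 1 ∧ (b = a + 1 ∨ (a = 0 ∧ b = n + 1) ∨ (a, b) ∈ D)

/-- `{a,b,c}` (with `a<b<c`) is a (triangular) face of the triangulation `D`. -/
def IsFace (n : ℕ) (D : Finset (ℕ × ℕ)) (a b c : ℕ) : Prop :=
  a < b ∧ b < c ∧ IsEdge n D a b ∧ IsEdge n D b c ∧ IsEdge n D a c

/-- An ear of a triangulation: a vertex incident to no diagonal. -/
def IsEar (n : ℕ) (D : Finset (ℕ × ℕ)) (v : ℕ) : Prop :=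
  v ≤ n + 1 ∧ ∀ d ∈ D, d.1 ≠ v ∧ d.2 ≠ v

/-- Degree of a vertex: number of edges (polygon sides and diagonals) incident to it. -/
noncomputable def degreeOf (n : ℕ) (D : Finset (ℕ × ℕ)) (v : ℕ) : ℕ :=
  ((Finset.range (n + 2)).filter (fun w => w ≠ v ∧ IsEdge n D (min v w) (max v w))).card

/-- The set of faces of a triangulation, as increasing triples. -/
noncomputable def facesSet (n : ℕ) (D : Finset (ℕ × ℕ)) : Finset (ℕ × ℕ × ℕ) :=
  (Finset.range (n + 2) ×ˢ Finset.range (n + 2) ×ˢ Finset.range (n + 2)).filter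
    (fun t => IsFace n D t.1 t.2.1 t.2.2)

/-- Predecessor of `v` in the vertex set `Y`. -/
def predIn (Y : Finset ℕ) (v : ℕ) : ℕ := WithBot.unbotD 0 (Y.filter (· < v)).max
/-- Successor of `v` in the vertex set `Y`. -/
def succIn (Y : Finset ℕ) (v : ℕ) : ℕ := WithTop.untopD 0 (Y.filter (v < ·)).min

/-- The iterative neighbor-joining construction: for each successive letter,
join its two current neighbors by a diagonal and delete the letter's vertex. -/
def phiAux : List ℕ → Finset ℕ → Finset (ℕ × ℕ)
  | [], _ => ∅
  | [_], _ => ∅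
  | v :: rest, Y => insert (predIn Y v, succIn Y v) (phiAux rest (Y.erase v))

/-- The map `φ` from permutations (standard words, letters `1,…,n`) to
triangulations of the `(n+2)`-gon with vertices `0,…,n+1`. -/
def phiT (n : ℕ) (l : List ℕ) : Finset (ℕ × ℕ) := phiAux l (Finset.range (n + 2))

/-- `t` is the third vertex of a face of `D` containing the polygon side `{i, i+1}`. -/
def FaceOnEdge (n : ℕ) (D : Finset (ℕ × ℕ)) (i t : ℕ) : Prop :=
  (t < i ∧ IsFace n D t i (i + 1)) ∨ (i + 1 < t ∧ IsFace n D i (i + 1) t)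

/-- `D` and `D'` differ by one diagonal flip, in the quadrilateral `a<b<c<d`. -/
def FlipAdj (n : ℕ) (D D' : Finset (ℕ × ℕ)) : Prop :=
  ∃ a b c d : ℕ, a < b ∧ b < c ∧ c < d ∧
    ((IsFace n D a b d ∧ IsFace n D b c d ∧ D' = insert (a, c) (D.erase (b, d))) ∨
     (IsFace n D a b c ∧ IsFace n D a c d ∧ D' = insert (b, d) (D.erase (a, c))))

/-- Sylvester adjacency: `u x z u' y u'' ~ u z x u' y u''` with `x ≤ y < z`. -/
def SylvAdj (w1 w2 : List ℕ) : Prop :=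
  ∃ (u u' u'' : List ℕ) (x y z : ℕ), x ≤ y ∧ y < z ∧
    w1 = u ++ x :: z :: (u' ++ y :: u'') ∧ w2 = u ++ z :: x :: (u' ++ y :: u'')

/-- Sylvester congruence: the equivalence relation generated by sylvester adjacency. -/
def SylvCong : List ℕ → List ℕ → Prop := Relation.EqvGen SylvAdj

/-- Standardization of a word: replace the occurrences of the smallest letter,
left to right, by `1, 2, …`, then continue with the next letter, etc. -/
def stdW (w : List ℕ) : List ℕ :=
  (List.range w.length).map (fun i =>
    (((List.range w.length).filter (fun j =>
      w.getD j 0 < w.getD i 0 ∨ (w.getD j 0 = w.getD i 0 ∧ j < i))).length) + 1)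

/-- Partial sums of an evaluation `μ`. -/
def Msum (μ : ℕ → ℕ) (s : ℕ) : ℕ := ∑ t ∈ Finset.range s, μ t

/-- The color (block index) of the vertex `i` for the increasing coloring `ε_μ`. -/
noncomputable def colOf (μ : ℕ → ℕ) (p i : ℕ) : ℕ :=
  ((Finset.range p).filter (fun s => Msum μ (s + 1) < i)).card

/-- `D`, colored by the increasing coloring `ε_μ`, is a simple colored triangulation. -/
def SimpleFor (n p : ℕ) (μ : ℕ → ℕ) (D : Finset (ℕ × ℕ)) : Prop :=
  IsTriangulation n D ∧
  (∀ d ∈ D, 1 ≤ d.1 → d.2 ≤ n → colOf μ p d.1 ≠ colOf μ p d.2) ∧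
  (∀ i t, 1 ≤ i → i + 1 ≤ n → colOf μ p i = colOf μ p (i + 1) →
    FaceOnEdge n D i t → t < i)

/-- Switched flip: a diagonal flip (preserving vertex colors) whose two adjacent
faces (with middle vertices `b` and `c`) have different colors. -/
def SwFlipAdj (n p : ℕ) (μ : ℕ → ℕ) (D D' : Finset (ℕ × ℕ)) : Prop :=
  ∃ a b c d : ℕ, a < b ∧ b < c ∧ c < d ∧ colOf μ p b ≠ colOf μ p c ∧
    ((IsFace n D a b d ∧ IsFace n D b c d ∧ D' = insert (a, c) (D.erase (b, d))) ∨
     (IsFace n D a b c ∧ IsFace n D a c d ∧ D' = insert (b, d) (D.erase (a, c))))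

theorem Finset.min_erase_of_lt {α : Type*} [LinearOrder α] {S : Finset α} {y z : α}
    (hy : y ∈ S) (hyz : y < z) : (S.erase z).min = S.min := by
  refine le_antisymm ?_ (Finset.min_mono (Finset.erase_subset _ _))
  obtain ⟨m, hm⟩ := S.min_of_mem hy
  have hmz : m ≠ z := ((Finset.min_le_of_eq hy hm).trans_lt hyz).ne
  exact hm ▸ Finset.min_le (Finset.mem_erase.mpr ⟨hmz, Finset.mem_of_min hm⟩)

theorem Finset.max_erase_of_lt {α : Type*} [LinearOrder α] {S : Finset α} {x y : α}
    (hy : y ∈ S) (hxy : x < y) : (S.erase x).max = S.max := by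
  refine le_antisymm (Finset.max_mono (Finset.erase_subset _ _)) ?_
  obtain ⟨m, hm⟩ := S.max_of_mem hy
  have hmx : m ≠ x := (hxy.trans_le (Finset.le_max_of_eq hy hm)).ne'
  exact hm ▸ Finset.le_max (Finset.mem_erase.mpr ⟨hmx, Finset.mem_of_max hm⟩)

section NeighborsInErase

variable {Y : Finset ℕ} {x y z : ℕ}

theorem predIn_erase_of_le (hxz : x ≤ z) : predIn (Y.erase z) x = predIn Y x := by
  unfold predIn
  rw [Finset.filter_erase, Finset.erase_eq_of_notMem fun h => (Finset.mem_filter.mp h).2.not_ge hxz]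

theorem succIn_erase_of_le (hxz : x ≤ z) : succIn (Y.erase x) z = succIn Y z := by
  unfold succIn
  rw [Finset.filter_erase, Finset.erase_eq_of_notMem fun h => (Finset.mem_filter.mp h).2.not_ge hxz]

theorem succIn_erase_of_mem_between (hy : y ∈ Y) (hxy : x < y) (hyz : y < z) :
    succIn (Y.erase z) x = succIn Y x := by
  unfold succIn
  rw [Finset.filter_erase, Finset.min_erase_of_lt (Finset.mem_filter.mpr ⟨hy, hxy⟩) hyz]

theorem predIn_erase_of_mem_between (hy : y ∈ Y) (hxy : x < y) (hyz : y < z) :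
    predIn (Y.erase x) z = predIn Y z := by
  unfold predIn
  rw [Finset.filter_erase, Finset.max_erase_of_lt (Finset.mem_filter.mpr ⟨hy, hyz⟩) hxy]

end NeighborsInErase

theorem phiAux_cons_of_ne_nil (a : ℕ) {l : List ℕ} (hl : l ≠ []) (Y : Finset ℕ) :
    phiAux (a :: l) Y = insert (predIn Y a, succIn Y a) (phiAux l (Y.erase a)) := by
  obtain ⟨b, t, rfl⟩ := List.exists_cons_of_ne_nil hl
  rfl

/-- With a vertex `y` strictly between `x` and `z` still present, deleting `x` does not change
the neighbors of `z` and vice versa, so both orders draw the same two diagonals. -/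
theorem phiAux_swap_of_mem_between {x y z : ℕ} (hxy : x < y) (hyz : y < z) {v : List ℕ}
    (hv : v ≠ []) {Y : Finset ℕ} (hy : y ∈ Y) :
    phiAux (x :: z :: v) Y = phiAux (z :: x :: v) Y := by
  have hxz : x ≤ z := (hxy.trans hyz).le
  rw [phiAux_cons_of_ne_nil x (List.cons_ne_nil z v), phiAux_cons_of_ne_nil z hv,
    phiAux_cons_of_ne_nil z (List.cons_ne_nil x v), phiAux_cons_of_ne_nil x hv,
    predIn_erase_of_mem_between hy hxy hyz, succIn_erase_of_le hxz,
    predIn_erase_of_le hxz, succIn_erase_of_mem_between hy hxy hyz,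
    Finset.insert_comm, Finset.erase_right_comm]

theorem phiAux_append_swap_of_mem_between {x y z : ℕ} (hxy : x < y) (hyz : y < z) {v : List ℕ}
    (hv : v ≠ []) (u : List ℕ) {Y : Finset ℕ} (hy : y ∈ Y) (hyu : y ∉ u) :
    phiAux (u ++ x :: z :: v) Y = phiAux (u ++ z :: x :: v) Y := by
  induction u generalizing Y with
  | nil => exact phiAux_swap_of_mem_between hxy hyz hv hy
  | cons a u ih =>
    rw [List.mem_cons, not_or] at hyu
    rw [List.cons_append, List.cons_append, phiAux_cons_of_ne_nil a (by simp),
      phiAux_cons_of_ne_nil a (by simp), ih (Finset.mem_erase.mpr ⟨hyu.1, hy⟩) hyu.2]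

theorem stmt8_general (n : ℕ) (u v : List ℕ) (x z : ℕ)
    (hl : (u ++ [x, z] ++ v).Perm ((List.range n).map (· + 1)))
    (hv : ∃ y ∈ v, x < y ∧ y < z) :
    phiT n (u ++ [x, z] ++ v) = phiT n (u ++ [z, x] ++ v) := by
  obtain ⟨y, hyv, hxy, hyz⟩ := hv
  have hnodup : (u ++ [x, z] ++ v).Nodup :=
    hl.nodup_iff.mpr (List.nodup_range.map (add_left_injective 1))
  have hyu : y ∉ u := fun hyu =>
    List.disjoint_of_nodup_append hnodup (List.mem_append_left _ hyu) hyv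
  have hy : y ∈ Finset.range (n + 2) := by
    obtain ⟨m, hm, rfl⟩ := List.mem_map.mp (hl.subset (List.mem_append_right _ hyv))
    simp only [List.mem_range] at hm
    simp only [Finset.mem_range]
    omega
  simpa only [phiT, List.append_assoc, List.cons_append, List.nil_append] using
    phiAux_append_swap_of_mem_between hxy hyz (List.ne_nil_of_mem hyv) u hy hyu

/-- If `σ = u x z v` and `σ' = u z x v` with `x < z` and `v` contains some letter `y`
with `x < y < z`, then `φ(σ) = φ(σ')`. -/
theorem stmt8 (n : ℕ) (u v : List ℕ) (x z : ℕ) (hxz : x < z)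
    (hl : (u ++ [x, z] ++ v).Perm ((List.range n).map (· + 1)))
    (hv : ∃ y ∈ v, x < y ∧ y < z) :
    phiT n (u ++ [x, z] ++ v) = phiT n (u ++ [z, x] ++ v) :=
  stmt8_general n u v x z hl hv
end

section
/- The map φ is a surjective graph morphism from the Cayley graph of S_n (with edges given by adjacent transpositions) to the flip graph of triangulations of the (n+2)-gon: any edge of the Cayley graph is mapped either to a single vertex or to an edge of the flip graph. -/
open scoped Classical

/-!
Reading a word letter by letter, `φ` joins the two current neighbours of each letter and deletes
it, so the first letter of a word is an ear of its triangulation. Conversely every triangulation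
has an ear: a diagonal enclosing the fewest vertices encloses only one of them, because a
dissection of a `k`-gon has at most `k - 3` diagonals (peel off an innermost diagonal together
with the vertices beyond it). Cutting off ears one at a time spells a word that `φ` maps to the
triangulation.

For an adjacent transposition `x z ↦ z x` with `x < z`, consider the vertices still present after
the common prefix. If one of them lies between `x` and `z`, neither letter is a neighbour of the
other and the order does not matter. Otherwise, with `a` the predecessor of `x` and `d` the
successor of `z`, the order `x z` draws the diagonals `a z` and `a d`, the order `z x` draws `x d`
and `a d`, and everything else coincides: the two triangulations differ by the flip in the
quadrilateral `a x z d`.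
-/

open Finset

def NoneBetween (Y : Finset ℕ) (p q : ℕ) : Prop := ∀ y ∈ Y, ¬(p < y ∧ y < q)

lemma NoneBetween.mono {Y Y' : Finset ℕ} {p q : ℕ} (h : NoneBetween Y p q) (hY : Y' ⊆ Y) :
    NoneBetween Y' p q :=
  fun y hy => h y (hY hy)

section Neighbors

variable {Y : Finset ℕ} {v y : ℕ}

lemma predIn_eq_max' (h : (Y.filter (· < v)).Nonempty) :
    predIn Y v = (Y.filter (· < v)).max' h := by
  rw [predIn, ← coe_max' h]; rfl

lemma succIn_eq_min' (h : (Y.filter (v < ·)).Nonempty) :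
    succIn Y v = (Y.filter (v < ·)).min' h := by
  rw [succIn, ← coe_min' h]; rfl

lemma le_predIn (hy : y ∈ Y) (hyv : y < v) : y ≤ predIn Y v := by
  have h : y ∈ Y.filter (· < v) := mem_filter.2 ⟨hy, hyv⟩
  rw [predIn_eq_max' ⟨y, h⟩]
  exact le_max' _ y h

lemma succIn_le (hy : y ∈ Y) (hvy : v < y) : succIn Y v ≤ y := by
  have h : y ∈ Y.filter (v < ·) := mem_filter.2 ⟨hy, hvy⟩
  rw [succIn_eq_min' ⟨y, h⟩]
  exact min'_le _ y h

lemma predIn_mem_lt (hy : y ∈ Y) (hyv : y < v) : predIn Y v ∈ Y ∧ predIn Y v < v := by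
  have h : (Y.filter (· < v)).Nonempty := ⟨y, mem_filter.2 ⟨hy, hyv⟩⟩
  rw [predIn_eq_max' h]
  exact mem_filter.1 (max'_mem _ h)

lemma succIn_mem_gt (hy : y ∈ Y) (hvy : v < y) : succIn Y v ∈ Y ∧ v < succIn Y v := by
  have h : (Y.filter (v < ·)).Nonempty := ⟨y, mem_filter.2 ⟨hy, hvy⟩⟩
  rw [succIn_eq_min' h]
  exact mem_filter.1 (min'_mem _ h)

lemma noneBetween_predIn : NoneBetween Y (predIn Y v) v :=
  fun _ hy h => (le_predIn hy h.2).not_gt h.1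

lemma noneBetween_succIn : NoneBetween Y v (succIn Y v) :=
  fun _ hy h => (succIn_le hy h.1).not_gt h.2

lemma NoneBetween.erase_join {p x q : ℕ} (hp : NoneBetween Y p x) (hq : NoneBetween Y x q) :
    NoneBetween (Y.erase x) p q := by
  intro y hy h
  obtain ⟨hyx, hy⟩ := mem_erase.1 hy
  rcases Nat.lt_or_gt_of_ne hyx with hlt | hgt
  · exact hp y hy ⟨h.1, hlt⟩
  · exact hq y hy ⟨hgt, h.2⟩

lemma predIn_eq_of_noneBetween {p : ℕ} (hp : p ∈ Y) (hpv : p < v) (h : NoneBetween Y p v) :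
    predIn Y v = p := by
  obtain ⟨hmem, hlt⟩ := predIn_mem_lt hp hpv
  have := le_predIn hp hpv
  by_contra hne
  exact h _ hmem ⟨by omega, hlt⟩

lemma succIn_eq_of_noneBetween {q : ℕ} (hq : q ∈ Y) (hvq : v < q) (h : NoneBetween Y v q) :
    succIn Y v = q := by
  obtain ⟨hmem, hgt⟩ := succIn_mem_gt hq hvq
  have := succIn_le hq hvq
  by_contra hne
  exact h _ hmem ⟨hgt, by omega⟩

lemma predIn_succIn_of_inter_Ioo_eq {a b : ℕ} (ha : a ∈ Y) (hb : b ∈ Y)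
    (h : Y ∩ Ioo a b = {v}) : predIn Y v = a ∧ succIn Y v = b := by
  have hv : a < v ∧ v < b := mem_Ioo.1 (mem_inter.1 (h ▸ mem_singleton_self v)).2
  have hI : ∀ y ∈ Y, a < y → y < b → y = v := fun y hy h1 h2 =>
    mem_singleton.1 (h ▸ mem_inter.2 ⟨hy, mem_Ioo.2 ⟨h1, h2⟩⟩)
  refine ⟨predIn_eq_of_noneBetween ha hv.1 ?_, succIn_eq_of_noneBetween hb hv.2 ?_⟩
  · intro y hy ⟨h1, h2⟩
    exact h2.ne (hI y hy h1 (by omega))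
  · intro y hy ⟨h1, h2⟩
    exact h1.ne' (hI y hy (by omega) h2)

lemma predIn_erase_of_lt {x : ℕ} (h : v < x) : predIn (Y.erase x) v = predIn Y v := by
  rw [predIn, predIn, filter_erase,
    erase_eq_of_notMem (by simp only [mem_filter, not_and, not_lt]; omega)]

lemma succIn_erase_of_lt {x : ℕ} (h : x < v) : succIn (Y.erase x) v = succIn Y v := by
  rw [succIn, succIn, filter_erase,
    erase_eq_of_notMem (by simp only [mem_filter, not_and, not_lt]; omega)]

lemma predIn_erase_of_mem_between_s9 {x w : ℕ} (hw : w ∈ Y) (hxw : x < w) (hwv : w < v) :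
    predIn (Y.erase x) v = predIn Y v := by
  obtain ⟨hmem, hlt⟩ := predIn_mem_lt hw hwv
  have := le_predIn hw hwv
  exact predIn_eq_of_noneBetween (mem_erase.2 ⟨by omega, hmem⟩) hlt
    (noneBetween_predIn.mono (erase_subset x Y))

lemma succIn_erase_of_mem_between_s9 {x w : ℕ} (hw : w ∈ Y) (hvw : v < w) (hwx : w < x) :
    succIn (Y.erase x) v = succIn Y v := by
  obtain ⟨hmem, hgt⟩ := succIn_mem_gt hw hvw
  have := succIn_le hw hvw
  exact succIn_eq_of_noneBetween (mem_erase.2 ⟨by omega, hmem⟩) hgt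
    (noneBetween_succIn.mono (erase_subset x Y))

end Neighbors

/-- Like `phiAux`, but the last letter is processed too: for a full word it only adds the side
`(lo, hi)`, and in exchange `phiG` is additive along concatenation. -/
def phiG : List ℕ → Finset ℕ → Finset (ℕ × ℕ)
  | [], _ => ∅
  | v :: r, Y => insert (predIn Y v, succIn Y v) (phiG r (Y.erase v))

lemma phiAux_eq_phiG_dropLast : ∀ (l : List ℕ) (Y : Finset ℕ), phiAux l Y = phiG l.dropLast Y
  | [], _ => rfl
  | [_], _ => rfl
  | _ :: w :: r, _ => congrArg (insert _) (phiAux_eq_phiG_dropLast (w :: r) _)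

lemma sdiff_toFinset_cons (Y : Finset ℕ) (v : ℕ) (r : List ℕ) :
    Y \ (v :: r).toFinset = Y.erase v \ r.toFinset := by
  rw [List.toFinset_cons, sdiff_insert, erase_sdiff_comm]

lemma phiG_append : ∀ (u m : List ℕ) (Y : Finset ℕ),
    phiG (u ++ m) Y = phiG u Y ∪ phiG m (Y \ u.toFinset)
  | [], m, Y => by simp [phiG]
  | v :: r, m, Y => by
    rw [List.cons_append, phiG, phiG, phiG_append r, sdiff_toFinset_cons, insert_union]

lemma noneBetween_of_mem_phiG : ∀ {u : List ℕ} {Y : Finset ℕ} {d : ℕ × ℕ}, d ∈ phiG u Y →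
    NoneBetween (Y \ u.toFinset) d.1 d.2
  | v :: r, Y, d, hd => by
    rw [sdiff_toFinset_cons]
    rcases mem_insert.1 hd with rfl | hd
    · exact (noneBetween_predIn.erase_join noneBetween_succIn).mono sdiff_subset
    · exact noneBetween_of_mem_phiG hd

lemma notMem_phiG_of_mem_between {u : List ℕ} {Y : Finset ℕ} {p q y : ℕ}
    (hy : y ∈ Y \ u.toFinset) (hpy : p < y) (hyq : y < q) : (p, q) ∉ phiG u Y :=
  fun h => noneBetween_of_mem_phiG h y hy ⟨hpy, hyq⟩

lemma noneBetween_or_mem_phiG : ∀ {u : List ℕ} {Y : Finset ℕ} {p q : ℕ},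
    p ∈ Y \ u.toFinset → q ∈ Y \ u.toFinset → NoneBetween (Y \ u.toFinset) p q →
    NoneBetween Y p q ∨ (p, q) ∈ phiG u Y
  | [], Y, p, q, _, _, h => Or.inl (by simpa using h)
  | v :: r, Y, p, q, hp, hq, h => by
    rw [sdiff_toFinset_cons] at hp hq h
    rcases noneBetween_or_mem_phiG hp hq h with h' | h'
    · by_cases hY : NoneBetween Y p q
      · exact Or.inl hY
      right
      obtain ⟨y, hy, hpy, hyq⟩ : ∃ y ∈ Y, p < y ∧ y < q := by
        simpa [NoneBetween] using hY
      have hyv : y = v := by_contra fun hne => h' y (mem_erase.2 ⟨hne, hy⟩) ⟨hpy, hyq⟩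
      subst hyv
      have hpY := mem_of_mem_erase (sdiff_subset hp)
      have hqY := mem_of_mem_erase (sdiff_subset hq)
      have hpred : predIn Y y = p := predIn_eq_of_noneBetween hpY hpy fun w hw hw' =>
        h' w (mem_erase.2 ⟨hw'.2.ne, hw⟩) ⟨hw'.1, by omega⟩
      have hsucc : succIn Y y = q := succIn_eq_of_noneBetween hqY hyq fun w hw hw' =>
        h' w (mem_erase.2 ⟨hw'.1.ne', hw⟩) ⟨by omega, hw'.2⟩
      rw [phiG, hpred, hsucc]
      exact mem_insert_self _ _
    · exact Or.inr (mem_insert_of_mem h')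

lemma exists_mem_between_of_mem_phiG {lo hi : ℕ} : ∀ {m : List ℕ} {Y : Finset ℕ},
    m.Nodup → (∀ w ∈ m, w ∈ Y ∧ lo < w ∧ w < hi) → lo ∈ Y → hi ∈ Y →
    ∀ d ∈ phiG m Y, ∃ y ∈ Y, d.1 < y ∧ y < d.2
  | v :: r, Y, hnd, hm, hlo, hhi, d, hd => by
    obtain ⟨hv, hlov, hvhi⟩ := hm v List.mem_cons_self
    rcases mem_insert.1 hd with rfl | hd
    · exact ⟨v, hv, (predIn_mem_lt hlo hlov).2, (succIn_mem_gt hhi hvhi).2⟩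
    obtain ⟨hvr, hrnd⟩ := List.nodup_cons.1 hnd
    have hr : ∀ w ∈ r, w ∈ Y.erase v ∧ lo < w ∧ w < hi := fun w hw =>
      have hw' := hm w (List.mem_cons_of_mem v hw)
      ⟨mem_erase.2 ⟨fun h => hvr (h ▸ hw), hw'.1⟩, hw'.2⟩
    obtain ⟨y, hy, hdy⟩ := exists_mem_between_of_mem_phiG hrnd hr
      (mem_erase.2 ⟨hlov.ne, hlo⟩) (mem_erase.2 ⟨hvhi.ne', hhi⟩) d hd
    exact ⟨y, mem_of_mem_erase hy, hdy⟩

lemma notMem_phiG_of_noneBetween {lo hi p q : ℕ} {m : List ℕ} {Y : Finset ℕ} (hnd : m.Nodup)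
    (hm : ∀ w ∈ m, w ∈ Y ∧ lo < w ∧ w < hi) (hlo : lo ∈ Y) (hhi : hi ∈ Y)
    (h : NoneBetween Y p q) : (p, q) ∉ phiG m Y := fun hpq => by
  obtain ⟨y, hy, hpqy⟩ := exists_mem_between_of_mem_phiG hnd hm hlo hhi _ hpq
  exact h y hy hpqy

lemma phiG_eq_insert_phiAux {l : List ℕ} {Y : Finset ℕ} {lo hi : ℕ} (hnd : l.Nodup)
    (hne : l ≠ []) (hl : l.toFinset = Y \ {lo, hi}) (hlo : lo ∈ Y) (hhi : hi ∈ Y)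
    (hY : Y ⊆ Icc lo hi) : phiG l Y = insert (lo, hi) (phiAux l Y) ∧ (lo, hi) ∉ phiAux l Y := by
  obtain ⟨m, w, rfl⟩ := (List.eq_nil_or_concat' l).resolve_left hne
  have hmem : ∀ y, y = w ∨ y ∈ m ↔ y ∈ Y ∧ y ≠ lo ∧ y ≠ hi := fun y => by
    simpa using congrArg (y ∈ ·) hl
  have hwm : w ∉ m := fun h => (List.nodup_append.1 hnd).2.2 w h w (by simp) rfl
  have hw := (hmem w).1 (Or.inl rfl)
  have hwY := mem_Icc.1 (hY hw.1)
  have hwI : lo < w ∧ w < hi := ⟨lt_of_le_of_ne hwY.1 hw.2.1.symm, lt_of_le_of_ne hwY.2 hw.2.2⟩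
  have hlo' : lo ∈ Y \ m.toFinset := mem_sdiff.2 ⟨hlo, fun h =>
    ((hmem lo).1 (Or.inr (List.mem_toFinset.1 h))).2.1 rfl⟩
  have hhi' : hi ∈ Y \ m.toFinset := mem_sdiff.2 ⟨hhi, fun h =>
    ((hmem hi).1 (Or.inr (List.mem_toFinset.1 h))).2.2 rfl⟩
  have hw' : w ∈ Y \ m.toFinset := mem_sdiff.2 ⟨hw.1, by simpa using hwm⟩
  have hI : (Y \ m.toFinset) ∩ Ioo lo hi = {w} := by
    ext y
    simp only [mem_inter, mem_sdiff, mem_Ioo, mem_singleton, List.mem_toFinset]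
    constructor
    · rintro ⟨⟨hy, hym⟩, h1, h2⟩
      exact ((hmem y).2 ⟨hy, h1.ne', h2.ne⟩).resolve_right hym
    · rintro rfl
      exact ⟨⟨hw.1, hwm⟩, hwI⟩
  obtain ⟨hpred, hsucc⟩ := predIn_succIn_of_inter_Ioo_eq hlo' hhi' hI
  rw [phiAux_eq_phiG_dropLast, List.dropLast_concat, phiG_append]
  refine ⟨?_, notMem_phiG_of_mem_between hw' hwI.1 hwI.2⟩
  rw [phiG, hpred, hsucc, phiG, union_insert, union_empty]

lemma mem_map_range_add_one {n w : ℕ} : w ∈ (List.range n).map (· + 1) ↔ 1 ≤ w ∧ w ≤ n := by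
  simp only [List.mem_map, List.mem_range]
  constructor
  · rintro ⟨i, hi, rfl⟩; omega
  · intro h; exact ⟨w - 1, by omega, by omega⟩

lemma nodup_map_range_add_one {n : ℕ} : ((List.range n).map (· + 1)).Nodup :=
  List.nodup_range.map (add_left_injective 1)

lemma range_add_two_eq_Icc (n : ℕ) : range (n + 2) = Icc 0 (n + 1) := by
  rw [range_eq_Ico, ← Ico_add_one_right_eq_Icc]
  rfl

lemma toFinset_of_perm_map_range_add_one {n : ℕ} {l : List ℕ}
    (hl : l.Perm ((List.range n).map (· + 1))) :
    l.toFinset = range (n + 2) \ {0, n + 1} := by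
  ext w
  simp only [List.mem_toFinset, hl.mem_iff, mem_map_range_add_one, mem_sdiff, mem_range,
    mem_insert, mem_singleton]
  omega

lemma phiG_eq_insert_phiT {n : ℕ} {l : List ℕ} (hl : l.Perm ((List.range n).map (· + 1)))
    (hne : l ≠ []) :
    phiG l (range (n + 2)) = insert (0, n + 1) (phiT n l) ∧ (0, n + 1) ∉ phiT n l :=
  phiG_eq_insert_phiAux (hl.nodup_iff.2 nodup_map_range_add_one) hne
    (toFinset_of_perm_map_range_add_one hl) (by simp) (by simp) (range_add_two_eq_Icc n).le

/-- The vertex outside `[d.1, d.2]` excludes the side joining the extreme vertices of `Y`. -/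
def IsDiagonalOf (Y : Finset ℕ) (d : ℕ × ℕ) : Prop :=
  d.1 ∈ Y ∧ d.2 ∈ Y ∧ (∃ y ∈ Y, d.1 < y ∧ y < d.2) ∧ ∃ y ∈ Y, y < d.1 ∨ d.2 < y

def IsDissection (Y : Finset ℕ) (D : Finset (ℕ × ℕ)) : Prop :=
  (∀ d ∈ D, IsDiagonalOf Y d) ∧ ∀ d ∈ D, ∀ e ∈ D, ¬Crosses d e

lemma IsDiagonalOf.three_le_card_sdiff_Ioo {Y : Finset ℕ} {d : ℕ × ℕ} (hd : IsDiagonalOf Y d) :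
    3 ≤ (Y \ Ioo d.1 d.2).card := by
  obtain ⟨h1, h2, ⟨w, -, hw⟩, o, ho, hout⟩ := hd
  have hsub : {d.1, d.2, o} ⊆ Y \ Ioo d.1 d.2 := by
    intro y hy
    simp only [mem_insert, mem_singleton] at hy
    rcases hy with rfl | rfl | rfl
    exacts [mem_sdiff.2 ⟨h1, by simp⟩, mem_sdiff.2 ⟨h2, by simp⟩,
      mem_sdiff.2 ⟨ho, by simp only [mem_Ioo]; omega⟩]
  have hcard : ({d.1, d.2, o} : Finset ℕ).card = 3 :=
    card_eq_three.2 ⟨_, _, _, by omega, by omega, by omega, rfl⟩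
  exact hcard ▸ card_le_card hsub

lemma card_inter_Ioo_lt {Y : Finset ℕ} {a b p q c : ℕ} (hc : c ∈ Y) (hap : a ≤ p) (hqb : q ≤ b)
    (hac : a < c) (hcb : c < b) (hcpq : c ≤ p ∨ q ≤ c) :
    (Y ∩ Ioo p q).card < (Y ∩ Ioo a b).card := by
  refine card_lt_card ((ssubset_iff_of_subset
    (inter_subset_inter_left (Ioo_subset_Ioo hap hqb))).2 ⟨c, ?_, ?_⟩)
  · exact mem_inter.2 ⟨hc, mem_Ioo.2 ⟨hac, hcb⟩⟩
  · simp only [mem_inter, mem_Ioo]; omega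

/-- Take a diagonal enclosing the fewest vertices: a diagonal with an endpoint strictly inside it
would be nested in it and enclose fewer. -/
lemma IsDissection.exists_innermost {Y : Finset ℕ} {D : Finset (ℕ × ℕ)} (hD : IsDissection Y D)
    (hne : D.Nonempty) :
    ∃ d ∈ D, ∀ e ∈ D, ¬(d.1 < e.1 ∧ e.1 < d.2) ∧ ¬(d.1 < e.2 ∧ e.2 < d.2) := by
  obtain ⟨d, hd, hmin⟩ := exists_min_image D (fun e => (Y ∩ Ioo e.1 e.2).card) hne
  refine ⟨d, hd, fun e he => ⟨fun h => ?_, fun h => ?_⟩⟩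
  all_goals
    have hcross := hD.2 d hd e he
    have hcross' := hD.2 e he d hd
    obtain ⟨he1, he2, ⟨w, -, hw⟩, -⟩ := hD.1 e he
    unfold Crosses at hcross hcross'
    have := hmin e he
  · exact this.not_gt (card_inter_Ioo_lt he1 (by omega) (by omega) h.1 h.2 (by omega))
  · exact this.not_gt (card_inter_Ioo_lt he2 (by omega) (by omega) h.1 h.2 (by omega))

lemma IsDissection.sdiff_Ioo {Y : Finset ℕ} {D : Finset (ℕ × ℕ)} (hD : IsDissection Y D)
    {d : ℕ × ℕ} (hd : d ∈ D)
    (hinner : ∀ e ∈ D, ¬(d.1 < e.1 ∧ e.1 < d.2) ∧ ¬(d.1 < e.2 ∧ e.2 < d.2)) :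
    IsDissection (Y \ Ioo d.1 d.2) (D.erase d) := by
  refine ⟨fun e he => ?_, fun e he e' he' => hD.2 e (mem_of_mem_erase he) e' (mem_of_mem_erase he')⟩
  obtain ⟨hed, he⟩ := mem_erase.1 he
  obtain ⟨hd1, hd2, ⟨w, -, hw⟩, -⟩ := hD.1 d hd
  obtain ⟨he1, he2, ⟨y, hy, hey⟩, o, ho, heo⟩ := hD.1 e he
  have hout := hinner e he
  have hne : e.1 ≠ d.1 ∨ e.2 ≠ d.2 := by
    by_contra! h; exact hed (Prod.ext h.1 h.2)
  simp only [IsDiagonalOf, mem_sdiff, mem_Ioo]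
  refine ⟨⟨he1, by omega⟩, ⟨he2, by omega⟩, ?_, ?_⟩
  · by_cases hyd : d.1 < y ∧ y < d.2
    · by_cases h : e.1 < d.1
      · exact ⟨d.1, ⟨hd1, by omega⟩, by omega⟩
      · exact ⟨d.2, ⟨hd2, by omega⟩, by omega⟩
    · exact ⟨y, ⟨hy, hyd⟩, hey⟩
  · by_cases hod : d.1 < o ∧ o < d.2
    · by_cases h : o < e.1
      · exact ⟨d.1, ⟨hd1, by omega⟩, by omega⟩
      · exact ⟨d.2, ⟨hd2, by omega⟩, by omega⟩
    · exact ⟨o, ⟨ho, hod⟩, heo⟩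

lemma IsDissection.exists_peel {Y : Finset ℕ} {D : Finset (ℕ × ℕ)} (hD : IsDissection Y D)
    (hne : D.Nonempty) :
    ∃ d ∈ D, (Y ∩ Ioo d.1 d.2).Nonempty ∧ 3 ≤ (Y \ Ioo d.1 d.2).card ∧
      IsDissection (Y \ Ioo d.1 d.2) (D.erase d) := by
  obtain ⟨d, hd, hinner⟩ := hD.exists_innermost hne
  obtain ⟨-, -, ⟨w, hw, hdw⟩, -⟩ := hD.1 d hd
  exact ⟨d, hd, ⟨w, mem_inter.2 ⟨hw, mem_Ioo.2 hdw⟩⟩, (hD.1 d hd).three_le_card_sdiff_Ioo,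
    hD.sdiff_Ioo hd hinner⟩

lemma IsDissection.card_add_three_le {Y : Finset ℕ} {D : Finset (ℕ × ℕ)} (hD : IsDissection Y D)
    (hY : 3 ≤ Y.card) : D.card + 3 ≤ Y.card := by
  induction hk : D.card generalizing Y D with
  | zero => exact hY
  | succ k ih =>
    obtain ⟨d, hd, hI, hY', hD'⟩ := hD.exists_peel (card_pos.1 (by omega))
    have := ih hD' hY' (by rw [card_erase_of_mem hd, hk]; rfl)
    have := card_sdiff_add_card_inter Y (Ioo d.1 d.2)
    have := hI.card_pos
    omega

lemma IsDissection.exists_ear {Y : Finset ℕ} {D : Finset (ℕ × ℕ)} (hD : IsDissection Y D)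
    (hne : D.Nonempty) (hcard : D.card + 3 = Y.card) :
    ∃ d ∈ D, ∃ v, Y ∩ Ioo d.1 d.2 = {v} ∧ IsDissection (Y.erase v) (D.erase d) := by
  obtain ⟨d, hd, hI, hY', hD'⟩ := hD.exists_peel hne
  have hle := hD'.card_add_three_le hY'
  rw [card_erase_of_mem hd] at hle
  have := card_sdiff_add_card_inter Y (Ioo d.1 d.2)
  have := hne.card_pos
  obtain ⟨v, hv⟩ := card_eq_one.1 (show (Y ∩ Ioo d.1 d.2).card = 1 by have := hI.card_pos; omega)
  refine ⟨d, hd, v, hv, ?_⟩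
  rwa [← sdiff_singleton_eq_erase, ← hv, sdiff_inter_self_left]

lemma exists_phiG_singleton_eq {Y : Finset ℕ} {lo hi : ℕ} (hlo : lo ∈ Y) (hhi : hi ∈ Y)
    (hY : Y ⊆ Icc lo hi) (hcard : Y.card = 3) :
    ∃ w, Y \ {lo, hi} = {w} ∧ phiG [w] Y = {(lo, hi)} := by
  have hlohi : lo + 2 ≤ hi := by
    have := card_le_card hY
    rw [Nat.card_Icc] at this
    omega
  have hsub : ({lo, hi} : Finset ℕ) ⊆ Y := insert_subset hlo (singleton_subset_iff.2 hhi)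
  obtain ⟨w, hw⟩ : ∃ w, Y \ {lo, hi} = {w} := card_eq_one.1 (by
    rw [card_sdiff_of_subset hsub, card_pair (by omega)]
    omega)
  have hI : Y ∩ Ioo lo hi = {w} := by
    rw [← hw]
    ext y
    simp only [mem_inter, mem_Ioo, mem_sdiff, mem_insert, mem_singleton]
    constructor
    · rintro ⟨hy, h1, h2⟩; exact ⟨hy, by omega⟩
    · rintro ⟨hy, h⟩; have := mem_Icc.1 (hY hy); exact ⟨hy, by omega, by omega⟩
  obtain ⟨hpred, hsucc⟩ := predIn_succIn_of_inter_Ioo_eq hlo hhi hI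
  exact ⟨w, hw, by rw [phiG, phiG, hpred, hsucc]; rfl⟩

lemma IsDissection.exists_phiG_eq {Y : Finset ℕ} {D : Finset (ℕ × ℕ)} {lo hi : ℕ}
    (hD : IsDissection Y D) (hlo : lo ∈ Y) (hhi : hi ∈ Y) (hY : Y ⊆ Icc lo hi)
    (hcard : D.card + 3 = Y.card) :
    ∃ l : List ℕ, l.Nodup ∧ l.toFinset = Y \ {lo, hi} ∧ phiG l Y = insert (lo, hi) D := by
  induction hk : D.card generalizing Y D with
  | zero =>
    obtain ⟨w, hw, hphi⟩ := exists_phiG_singleton_eq hlo hhi hY (by omega)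
    exact ⟨[w], List.nodup_singleton w, by simp [hw], by rw [card_eq_zero.1 hk, hphi]; rfl⟩
  | succ k ih =>
    obtain ⟨d, hd, v, hv, hD'⟩ := hD.exists_ear (card_pos.1 (by omega)) hcard
    have hvY : v ∈ Y ∧ d.1 < v ∧ v < d.2 := by
      have : v ∈ Y ∩ Ioo d.1 d.2 := hv ▸ mem_singleton_self v
      simpa only [mem_inter, mem_Ioo] using this
    obtain ⟨hd1, hd2, -⟩ := hD.1 d hd
    have hd1' := mem_Icc.1 (hY hd1)
    have hd2' := mem_Icc.1 (hY hd2)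
    obtain ⟨l, hnd, hl, hphi⟩ := ih hD' (mem_erase.2 ⟨by omega, hlo⟩) (mem_erase.2 ⟨by omega, hhi⟩)
      ((erase_subset v Y).trans hY)
      (by rw [card_erase_of_mem hd, card_erase_of_mem hvY.1]; omega)
      (by rw [card_erase_of_mem hd, hk]; rfl)
    obtain ⟨hpred, hsucc⟩ := predIn_succIn_of_inter_Ioo_eq hd1 hd2 hv
    refine ⟨v :: l, List.nodup_cons.2 ⟨fun h => ?_, hnd⟩, ?_, ?_⟩
    · have : v ∈ Y.erase v \ {lo, hi} := hl ▸ List.mem_toFinset.2 h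
      simp at this
    · rw [List.toFinset_cons, hl, erase_sdiff_comm, insert_erase]
      exact mem_sdiff.2 ⟨hvY.1, by simp only [mem_insert, mem_singleton]; omega⟩
    · rw [phiG, hpred, hsucc, hphi, insert_comm, insert_erase hd]

lemma IsTriangulation.isDissection {n : ℕ} {D : Finset (ℕ × ℕ)} (hT : IsTriangulation n D) :
    IsDissection (range (n + 2)) D := by
  refine ⟨fun d hd => ?_, hT.2.1⟩
  obtain ⟨h12, h2, hside, hnot⟩ := hT.1 d hd
  simp only [IsDiagonalOf, mem_range]
  refine ⟨by omega, by omega, ⟨d.1 + 1, by omega, by omega, by omega⟩, ?_⟩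
  by_cases h : d.1 = 0
  · exact ⟨n + 1, by omega, by omega⟩
  · exact ⟨0, by omega, by omega⟩

lemma IsTriangulation.exists_phiT_eq {n : ℕ} {D : Finset (ℕ × ℕ)} (hT : IsTriangulation n D) :
    ∃ l : List ℕ, l.Perm ((List.range n).map (· + 1)) ∧ phiT n l = D := by
  rcases Nat.eq_zero_or_pos n with rfl | hn
  · exact ⟨[], List.Perm.refl _, by simpa [phiT, phiAux] using (card_eq_zero.1 hT.2.2).symm⟩
  obtain ⟨l, hnd, hl, hphi⟩ := hT.isDissection.exists_phiG_eq (lo := 0) (hi := n + 1)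
    (by simp) (by simp) (range_add_two_eq_Icc n).le
    (by rw [hT.2.2, card_range]; omega)
  have hperm : l.Perm ((List.range n).map (· + 1)) :=
    List.perm_of_nodup_nodup_toFinset_eq hnd nodup_map_range_add_one
      (hl.trans (toFinset_of_perm_map_range_add_one (List.Perm.refl _)).symm)
  have hne : l ≠ [] := List.ne_nil_of_length_pos (by
    rw [hperm.length_eq, List.length_map, List.length_range]; exact hn)
  obtain ⟨hphiT, hnotT⟩ := phiG_eq_insert_phiT hperm hne
  have hnotD : (0, n + 1) ∉ D := fun h => (hT.1 _ h).2.2.2 ⟨rfl, rfl⟩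
  refine ⟨l, hperm, ?_⟩
  rw [← erase_insert hnotT, ← hphiT, hphi, erase_insert hnotD]

lemma IsEdge.mono {n a b : ℕ} {D D' : Finset (ℕ × ℕ)} (h : IsEdge n D a b) (hD : D ⊆ D') :
    IsEdge n D' a b :=
  ⟨h.1, h.2.1, h.2.2.imp_right (Or.imp_right (@hD _))⟩

lemma isEdge_erase_iff {n a b : ℕ} {D : Finset (ℕ × ℕ)} :
    IsEdge n (D.erase (0, n + 1)) a b ↔ IsEdge n D a b := by
  simp only [IsEdge, mem_erase, ne_eq, Prod.mk.injEq]
  tauto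

lemma flipAdj_insert {n a b c d : ℕ} {R : Finset (ℕ × ℕ)} (hab : IsEdge n R a b)
    (hbc : IsEdge n R b c) (hcd : IsEdge n R c d) (had : IsEdge n R a d)
    (hac : (a, c) ∉ R) (hbd : (b, d) ∉ R) :
    FlipAdj n (insert (a, c) R) (insert (b, d) R) ∧
      FlipAdj n (insert (b, d) R) (insert (a, c) R) := by
  have hsub {e : ℕ × ℕ} : R ⊆ insert e R := subset_insert e R
  have hac' : IsEdge n (insert (a, c) R) a c :=
    ⟨by have := hab.1; have := hbc.1; omega, hcd.2.1.trans' hcd.1.le,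
      Or.inr (Or.inr (mem_insert_self _ _))⟩
  have hbd' : IsEdge n (insert (b, d) R) b d :=
    ⟨by have := hbc.1; have := hcd.1; omega, hcd.2.1, Or.inr (Or.inr (mem_insert_self _ _))⟩
  constructor
  · refine ⟨a, b, c, d, hab.1, hbc.1, hcd.1, Or.inr ⟨?_, ?_, by rw [erase_insert hac]⟩⟩
    · exact ⟨hab.1, hbc.1, hab.mono hsub, hbc.mono hsub, hac'⟩
    · exact ⟨hac'.1, hcd.1, hac', hcd.mono hsub, had.mono hsub⟩
  · refine ⟨a, b, c, d, hab.1, hbc.1, hcd.1, Or.inl ⟨?_, ?_, by rw [erase_insert hbd]⟩⟩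
    · exact ⟨hab.1, hbd'.1, hab.mono hsub, hbd', had.mono hsub⟩
    · exact ⟨hbc.1, hcd.1, hbc.mono hsub, hcd.mono hsub, hbd'⟩

lemma phiG_swap_of_mem_between {Y : Finset ℕ} {x z w : ℕ} (hw : w ∈ Y) (hxw : x < w) (hwz : w < z)
    (m : List ℕ) : phiG (x :: z :: m) Y = phiG (z :: x :: m) Y := by
  simp only [phiG, predIn_erase_of_mem_between_s9 hw hxw hwz, succIn_erase_of_lt (hxw.trans hwz),
    predIn_erase_of_lt (hxw.trans hwz), succIn_erase_of_mem_between_s9 hw hxw hwz, erase_right_comm,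
    insert_comm]

/-- The two orders differ by the flip in the quadrilateral `predIn Y x < x < z < succIn Y z`. -/
lemma phiG_swap_of_noneBetween {Y : Finset ℕ} {lo hi x z : ℕ} {m : List ℕ}
    (hnd : (x :: z :: m).Nodup) (hm : ∀ w ∈ x :: z :: m, w ∈ Y ∧ lo < w ∧ w < hi)
    (hlo : lo ∈ Y) (hhi : hi ∈ Y) (hxz : x < z) (hgap : NoneBetween Y x z) :
    ∃ S, phiG (x :: z :: m) Y = insert (predIn Y x, z) S ∧
      phiG (z :: x :: m) Y = insert (x, succIn Y z) S ∧ (predIn Y x, succIn Y z) ∈ S ∧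
      (predIn Y x, z) ∉ S ∧ (x, succIn Y z) ∉ S := by
  obtain ⟨hx, hlox, -⟩ := hm x (by simp)
  obtain ⟨hz, -, hzhi⟩ := hm z (by simp)
  obtain ⟨ha, hax⟩ := predIn_mem_lt hlo hlox
  obtain ⟨hd, hzd⟩ := succIn_mem_gt hhi hzhi
  have hgap_az := noneBetween_predIn.erase_join hgap
  have hpred : predIn (Y.erase x) z = predIn Y x :=
    predIn_eq_of_noneBetween (mem_erase.2 ⟨hax.ne, ha⟩) (hax.trans hxz) hgap_az
  have hsucc : succIn (Y.erase z) x = succIn Y z :=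
    succIn_eq_of_noneBetween (mem_erase.2 ⟨hzd.ne', hd⟩) (hxz.trans hzd)
      (hgap.erase_join noneBetween_succIn)
  have hgap_ad := hgap_az.erase_join (noneBetween_succIn.mono (erase_subset x Y))
  obtain ⟨hxm, hzm, hmnd⟩ : x ∉ m ∧ z ∉ m ∧ m.Nodup := by
    simp only [List.nodup_cons, List.mem_cons, not_or] at hnd
    exact ⟨hnd.1.2, hnd.2.1, hnd.2.2⟩
  have hmem {w} : w ∈ (Y.erase x).erase z ↔ w ≠ z ∧ w ≠ x ∧ w ∈ Y := by
    simp only [mem_erase]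
  have hT {p q} (hap : predIn Y x ≤ p) (hqd : q ≤ succIn Y z) :
      (p, q) ∉ phiG m ((Y.erase x).erase z) :=
    notMem_phiG_of_noneBetween hmnd
      (fun w hw => ⟨hmem.2 ⟨fun h => hzm (h ▸ hw), fun h => hxm (h ▸ hw),
        (hm w (by simp [hw])).1⟩, (hm w (by simp [hw])).2⟩)
      (hmem.2 ⟨by omega, by omega, hlo⟩) (hmem.2 ⟨by omega, by omega, hhi⟩)
      (fun w hw h => hgap_ad w hw ⟨by omega, by omega⟩)
  refine ⟨insert (predIn Y x, succIn Y z) (phiG m ((Y.erase x).erase z)), ?_, ?_,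
    mem_insert_self _ _, ?_, ?_⟩
  · simp only [phiG, hpred, succIn_eq_of_noneBetween hz hxz hgap, succIn_erase_of_lt hxz]
  · simp only [phiG, hsucc, predIn_eq_of_noneBetween hx hxz hgap, predIn_erase_of_lt hxz,
      erase_right_comm (a := z)]
  all_goals simp only [mem_insert, Prod.mk.injEq, not_or, not_and]
  · exact ⟨fun _ => hzd.ne, hT le_rfl hzd.le⟩
  · exact ⟨fun h => absurd h hax.ne', hT hax.le le_rfl⟩

lemma isEdge_phiG_of_noneBetween {n p q : ℕ} {u : List ℕ} (hp : p ∈ range (n + 2) \ u.toFinset)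
    (hq : q ∈ range (n + 2) \ u.toFinset) (hpq : p < q)
    (h : NoneBetween (range (n + 2) \ u.toFinset) p q) : IsEdge n (phiG u (range (n + 2))) p q := by
  have hqn := mem_range.1 (mem_sdiff.1 hq).1
  refine ⟨hpq, by omega, ?_⟩
  rcases noneBetween_or_mem_phiG hp hq h with h | h
  · left
    by_contra hne
    exact h (p + 1) (mem_range.2 (by omega)) ⟨by omega, by omega⟩
  · exact Or.inr (Or.inr h)

lemma phiT_append {n : ℕ} {u m : List ℕ} (hperm : (u ++ m).Perm ((List.range n).map (· + 1)))
    (hne : u ++ m ≠ []) :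
    phiT n (u ++ m) =
      (phiG u (range (n + 2)) ∪ phiG m (range (n + 2) \ u.toFinset)).erase (0, n + 1) := by
  obtain ⟨h, hnot⟩ := phiG_eq_insert_phiT hperm hne
  rw [← phiG_append, h, erase_insert hnot]

lemma perm_swap_of_perm {u v l : List ℕ} {x z : ℕ} (h : (u ++ [x, z] ++ v).Perm l) :
    (u ++ [z, x] ++ v).Perm l := by
  simpa using ((List.Perm.swap z x v).append_left u).symm.trans (by simpa using h)

lemma mem_range_sdiff_iff_of_perm {n w : ℕ} {u m : List ℕ}
    (hperm : (u ++ m).Perm ((List.range n).map (· + 1))) :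
    w ∈ range (n + 2) \ u.toFinset ↔ w = 0 ∨ w = n + 1 ∨ w ∈ m := by
  have hdisj := (List.nodup_append.1 (hperm.nodup_iff.2
    nodup_map_range_add_one)).2.2
  have hmem : w ∈ u ∨ w ∈ m ↔ 1 ≤ w ∧ w ≤ n := by
    rw [← List.mem_append, hperm.mem_iff, mem_map_range_add_one]
  simp only [mem_sdiff, mem_range, List.mem_toFinset]
  by_cases hw : 1 ≤ w ∧ w ≤ n
  · have := fun h => hdisj w h w
    grind
  · grind

lemma flipAdj_phiT_swap_of_noneBetween {n x z : ℕ} {u v : List ℕ}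
    (hperm : (u ++ [x, z] ++ v).Perm ((List.range n).map (· + 1))) (hxz : x < z)
    (hgap : NoneBetween (range (n + 2) \ u.toFinset) x z) :
    FlipAdj n (phiT n (u ++ [x, z] ++ v)) (phiT n (u ++ [z, x] ++ v)) ∧
      FlipAdj n (phiT n (u ++ [z, x] ++ v)) (phiT n (u ++ [x, z] ++ v)) := by
  set Y := range (n + 2) \ u.toFinset
  have hperm₁ : (u ++ x :: z :: v).Perm ((List.range n).map (· + 1)) := by simpa using hperm
  have hperm₂ : (u ++ z :: x :: v).Perm ((List.range n).map (· + 1)) := by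
    simpa using perm_swap_of_perm hperm
  have hY : ∀ w, w = 0 ∨ w = n + 1 ∨ w ∈ x :: z :: v → w ∈ Y := fun w =>
    (mem_range_sdiff_iff_of_perm hperm₁).2
  have hletters : ∀ w ∈ x :: z :: v, w ∈ Y ∧ 0 < w ∧ w < n + 1 := fun w hw => by
    have := mem_map_range_add_one.1 (hperm₁.mem_iff.1 (List.mem_append_right u hw))
    exact ⟨hY w (Or.inr (Or.inr hw)), by omega, by omega⟩
  obtain ⟨hx, hx0, -⟩ := hletters x (by simp)
  obtain ⟨hz, -, hzn⟩ := hletters z (by simp)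
  obtain ⟨S, h1, h2, hadS, hazS, hxdS⟩ := phiG_swap_of_noneBetween
    (hperm₁.nodup_iff.2 nodup_map_range_add_one).of_append_right hletters
    (hY 0 (Or.inl rfl)) (hY (n + 1) (Or.inr (Or.inl rfl))) hxz hgap
  obtain ⟨ha, hax⟩ := predIn_mem_lt (hY 0 (Or.inl rfl)) hx0
  obtain ⟨hd, hzd⟩ := succIn_mem_gt (hY (n + 1) (Or.inr (Or.inl rfl))) hzn
  set R := (phiG u (range (n + 2)) ∪ S).erase (0, n + 1)
  have hD1 : phiT n (u ++ [x, z] ++ v) = insert (predIn Y x, z) R := by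
    simp only [List.append_assoc, List.cons_append, List.nil_append]
    rw [phiT_append hperm₁ (by simp), h1, union_insert]
    exact erase_insert_of_ne (by simp only [ne_eq, Prod.mk.injEq, not_and]; omega)
  have hD2 : phiT n (u ++ [z, x] ++ v) = insert (x, succIn Y z) R := by
    simp only [List.append_assoc, List.cons_append, List.nil_append]
    rw [phiT_append hperm₂ (by simp), h2, union_insert]
    exact erase_insert_of_ne (by simp only [ne_eq, Prod.mk.injEq, not_and]; omega)
  have hedge : ∀ {p q}, p ∈ Y → q ∈ Y → p < q → NoneBetween Y p q → IsEdge n R p q :=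
    fun hp hq hpq h => isEdge_erase_iff.2 ((isEdge_phiG_of_noneBetween hp hq hpq h).mono
      subset_union_left)
  rw [hD1, hD2]
  refine flipAdj_insert (hedge ha hx hax noneBetween_predIn) (hedge hx hz hxz hgap)
    (hedge hz hd hzd noneBetween_succIn) (isEdge_erase_iff.2 ⟨by omega,
      Nat.lt_succ_iff.1 (mem_range.1 (mem_sdiff.1 hd).1), Or.inr (Or.inr (mem_union_right _ hadS))⟩)
    (fun h => ?_) (fun h => ?_)
  all_goals rcases mem_union.1 (mem_of_mem_erase h) with hG | hS
  exacts [notMem_phiG_of_mem_between hx hax hxz hG, hazS hS,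
    notMem_phiG_of_mem_between hz hxz hzd hG, hxdS hS]

lemma phiT_swap_eq_of_mem_between {n x z w : ℕ} {u v : List ℕ}
    (hperm : (u ++ [x, z] ++ v).Perm ((List.range n).map (· + 1)))
    (hw : w ∈ range (n + 2) \ u.toFinset) (hxw : x < w) (hwz : w < z) :
    phiT n (u ++ [x, z] ++ v) = phiT n (u ++ [z, x] ++ v) := by
  rw [List.append_assoc, List.append_assoc, phiT_append (by simpa using hperm) (by simp),
    phiT_append (by simpa using perm_swap_of_perm hperm) (by simp)]
  simp only [List.cons_append, List.nil_append, phiG_swap_of_mem_between hw hxw hwz]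

lemma phiT_swap_of_lt {n x z : ℕ} {u v : List ℕ}
    (hperm : (u ++ [x, z] ++ v).Perm ((List.range n).map (· + 1))) (hxz : x < z) :
    phiT n (u ++ [x, z] ++ v) = phiT n (u ++ [z, x] ++ v) ∨
      FlipAdj n (phiT n (u ++ [x, z] ++ v)) (phiT n (u ++ [z, x] ++ v)) ∧
        FlipAdj n (phiT n (u ++ [z, x] ++ v)) (phiT n (u ++ [x, z] ++ v)) := by
  by_cases h : ∃ w ∈ range (n + 2) \ u.toFinset, x < w ∧ w < z
  · obtain ⟨w, hw, hxw, hwz⟩ := h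
    exact Or.inl (phiT_swap_eq_of_mem_between hperm hw hxw hwz)
  · exact Or.inr (flipAdj_phiT_swap_of_noneBetween hperm hxz fun w hw hxwz => h ⟨w, hw, hxwz⟩)

/-- `φ` is a surjective graph morphism from the Cayley graph of `S_n` to the flip
graph: it is surjective, and every edge of the Cayley graph (an adjacent
transposition) is mapped either to a single vertex or to an edge of the flip graph. -/
theorem stmt9 (n : ℕ) :
    (∀ D : Finset (ℕ × ℕ), IsTriangulation n D →
      ∃ l : List ℕ, l.Perm ((List.range n).map (· + 1)) ∧ phiT n l = D) ∧
    (∀ (u v : List ℕ) (x z : ℕ),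
      (u ++ [x, z] ++ v).Perm ((List.range n).map (· + 1)) →
      phiT n (u ++ [x, z] ++ v) = phiT n (u ++ [z, x] ++ v) ∨
      FlipAdj n (phiT n (u ++ [x, z] ++ v)) (phiT n (u ++ [z, x] ++ v))) := by
  refine ⟨fun D hD => hD.exists_phiT_eq, fun u v x z hperm => ?_⟩
  rcases lt_trichotomy x z with hxz | rfl | hzx
  · exact (phiT_swap_of_lt hperm hxz).imp_right And.left
  · exact Or.inl rfl
  · exact (phiT_swap_of_lt (perm_swap_of_perm hperm) hzx).imp Eq.symm And.right
end
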